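/- Let u be the mean exit time of the derivative-free dynamics from (a,b) starting at m ∈ (a,b): u(m) = κ[((m−a)/(b−a)) ∫_a^b ∫_a^y e^{−F(z)/ε} dz dy − ∫_a^m ∫_a^y e^{−F(z)/ε} dz dy], with κ = |b−a|/(ε Z_G) and Z_G = ∫_a^b e^{−F/ε} dz. If F is bounded, F_min ≤ F ≤ F_max, then u(m) ≤ ((b−m)(m−a)/ε) e^{(F_max − F_min)/ε}. -/

import Mathlib

open MeasureTheory Real intervalIntegral

/-!
Write `f = exp (-F / ε)` and `G y = ∫_a^y f`, so that
`ε u(m) = (b - a) / Z_G · ((m - a)/(b - a) ∫_a^b G - ∫_a^m G)`.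
Splitting `∫_a^b G` at `m`, the part over `[a, m]` enters with the factor `(m - a)/(b - a) - 1 ≤ 0`
and `G ≥ 0`, so only `(m - a)/(b - a) ∫_m^b G` survives, and `G ≤ (b - a) e^{-F_min/ε}` bounds it
by `(m - a)(b - m) e^{-F_min/ε}`. Finally `Z_G ≥ (b - a) e^{-F_max/ε}`.
-/

open Set

lemma Measurable.integrableOn_Icc_of_norm_le {f : ℝ → ℝ} (hf : Measurable f) {a b C : ℝ}
    (hC : ∀ z ∈ Icc a b, ‖f z‖ ≤ C) : IntegrableOn f (Icc a b) :=
  IntegrableOn.of_bound measure_Icc_lt_top hf.aestronglyMeasurable C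
    ((ae_restrict_iff' measurableSet_Icc).2 (.of_forall hC))

lemma mul_integral_sub_integral_le {g : ℝ → ℝ} {a m b C : ℝ} (ham : a ≤ m) (hmb : m ≤ b)
    (hg : IntervalIntegrable g volume a b) (hg0 : ∀ y ∈ Icc a m, 0 ≤ g y)
    (hgC : ∀ y ∈ Icc m b, g y ≤ C) :
    (m - a) / (b - a) * (∫ y in a..b, g y) - ∫ y in a..m, g y
      ≤ (m - a) * (b - m) / (b - a) * C := by
  have hg₁ : IntervalIntegrable g volume a m :=
    hg.mono_set (uIcc_subset_uIcc left_mem_uIcc (mem_uIcc_of_le ham hmb))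
  have hg₂ : IntervalIntegrable g volume m b :=
    hg.mono_set (uIcc_subset_uIcc (mem_uIcc_of_le ham hmb) right_mem_uIcc)
  have hr : (m - a) / (b - a) ≤ 1 := div_le_one_of_le₀ (by linarith) (by linarith)
  have hr₀ : 0 ≤ (m - a) / (b - a) := div_nonneg (by linarith) (by linarith)
  have h₁ : 0 ≤ ∫ y in a..m, g y := integral_nonneg ham hg0
  have h₂ : ∫ y in m..b, g y ≤ (b - m) * C := by
    simpa using integral_mono_on hmb hg₂ intervalIntegrable_const hgC
  rw [← integral_add_adjacent_intervals hg₁ hg₂]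
  calc (m - a) / (b - a) * ((∫ y in a..m, g y) + ∫ y in m..b, g y) - ∫ y in a..m, g y
      = ((m - a) / (b - a) - 1) * (∫ y in a..m, g y) + (m - a) / (b - a) * ∫ y in m..b, g y := by
        ring
    _ ≤ 0 + (m - a) / (b - a) * ((b - m) * C) := by
        gcongr
        exact mul_nonpos_of_nonpos_of_nonneg (by linarith) h₁
    _ = (m - a) * (b - m) / (b - a) * C := by ring

lemma scaled_mean_exit_time_le {f : ℝ → ℝ} {a m b lo hi : ℝ} (ham : a < m) (hmb : m ≤ b)
    (hf : IntegrableOn f (Icc a b)) (hlo : 0 < lo)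
    (hbounds : ∀ z ∈ Icc a b, lo ≤ f z ∧ f z ≤ hi) :
    (b - a) / (∫ z in a..b, f z) * ((m - a) / (b - a) * (∫ y in a..b, ∫ z in a..y, f z) -
      ∫ y in a..m, ∫ z in a..y, f z) ≤ (b - m) * (m - a) * (hi / lo) := by
  have hab : a < b := ham.trans_le hmb
  have hba : 0 < b - a := by linarith
  have hf' : IntegrableOn f (uIcc a b) := by rwa [uIcc_of_le hab.le]
  have hhi : 0 ≤ hi := hlo.le.trans <| (hbounds a (left_mem_Icc.2 hab.le)).1.trans
    (hbounds a (left_mem_Icc.2 hab.le)).2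
  have hprim_nonneg : ∀ y ∈ Icc a m, 0 ≤ ∫ z in a..y, f z := fun y hy =>
    integral_nonneg hy.1 fun z hz => hlo.le.trans (hbounds z ⟨hz.1, hz.2.trans (hy.2.trans hmb)⟩).1
  have hprim_le : ∀ y ∈ Icc m b, ∫ z in a..y, f z ≤ (b - a) * hi := fun y hy => by
    have hay : a ≤ y := ham.le.trans hy.1
    have hfay : IntervalIntegrable f volume a y :=
      hf'.intervalIntegrable.mono_set (uIcc_subset_uIcc left_mem_uIcc (mem_uIcc_of_le hay hy.2))
    calc ∫ z in a..y, f z ≤ ∫ _ in a..y, hi :=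
          integral_mono_on hay hfay intervalIntegrable_const
            fun z hz => (hbounds z ⟨hz.1, hz.2.trans hy.2⟩).2
      _ = (y - a) * hi := by simp
      _ ≤ (b - a) * hi := by gcongr; exact hy.2
  have hX := mul_integral_sub_integral_le ham.le hmb
    (continuousOn_primitive_interval hf').intervalIntegrable hprim_nonneg hprim_le
  have hZ : (b - a) * lo ≤ ∫ z in a..b, f z := by
    simpa using integral_mono_on hab.le intervalIntegrable_const hf'.intervalIntegrable
      fun z hz => (hbounds z hz).1
  have hZ₀ : 0 < ∫ z in a..b, f z := (mul_pos hba hlo).trans_le hZ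
  have hκ : (b - a) / ∫ z in a..b, f z ≤ 1 / lo := by
    rw [div_le_div_iff₀ hZ₀ hlo]; linarith
  calc _ ≤ (b - a) / (∫ z in a..b, f z) * ((m - a) * (b - m) / (b - a) * ((b - a) * hi)) := by
        gcongr
    _ ≤ 1 / lo * ((m - a) * (b - m) / (b - a) * ((b - a) * hi)) := by
        gcongr
    _ = (b - m) * (m - a) * (hi / lo) := by field_simp

/-- Upper bound on the mean exit time of the derivative-free dynamics: with
`κ = (b−a)/(ε Z_G)`, `Z_G = ∫_a^b e^{−F/ε}`, and `F_min ≤ F ≤ F_max`,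
`u(m) ≤ ((b−m)(m−a)/ε) e^{(F_max − F_min)/ε}`. -/
theorem stmt18 (a b m ε Fmin Fmax : ℝ) (ham : a < m) (hmb : m < b) (hε : 0 < ε)
    (F : ℝ → ℝ) (hF : Measurable F)
    (hbounds : ∀ z ∈ Set.Icc a b, Fmin ≤ F z ∧ F z ≤ Fmax)
    (ZG κ : ℝ)
    (hZG : ZG = ∫ z in a..b, Real.exp (-F z / ε))
    (hκ : κ = (b - a) / (ε * ZG))
    (u : ℝ → ℝ)
    (hu : u m = κ * (((m - a) / (b - a)) *
          (∫ y in a..b, ∫ z in a..y, Real.exp (-F z / ε)) -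
        ∫ y in a..m, ∫ z in a..y, Real.exp (-F z / ε))) :
    u m ≤ (b - m) * (m - a) / ε * Real.exp ((Fmax - Fmin) / ε) := by
  have hexp_bounds : ∀ z ∈ Icc a b,
      rexp (-Fmax / ε) ≤ rexp (-F z / ε) ∧ rexp (-F z / ε) ≤ rexp (-Fmin / ε) := fun z hz => by
    constructor <;> gcongr <;> linarith [hbounds z hz]
  have hint : IntegrableOn (fun z => rexp (-F z / ε)) (Icc a b) :=
    (hF.neg.div_const ε).exp.integrableOn_Icc_of_norm_le fun z hz => by
      rw [norm_of_nonneg (exp_pos _).le]; exact (hexp_bounds z hz).2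
  have key := scaled_mean_exit_time_le ham hmb.le hint (exp_pos _) hexp_bounds
  have hratio : rexp (-Fmin / ε) / rexp (-Fmax / ε) = rexp ((Fmax - Fmin) / ε) := by
    rw [← exp_sub]; congr 1; ring
  rw [hu, hκ, hZG, ← hratio]
  refine (Eq.trans_le ?_ (div_le_div_of_nonneg_right key hε.le)).trans_eq ?_ <;> ring
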